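/- arXiv:2401.00108 — 5 statements merged into one kernel-verified Lean document; each statement's English description precedes it below -/
import Mathlib

section
/- Let F be ℓ-weakly convex and hidden convex on X with moduli μ_c > 0 and μ_H ≥ 0, let x̄ ∈ X satisfy 0 ∈ ∂Φ(x̄) (a stationary point of Φ := F + δ_X), and suppose the map c is Fréchet differentiable at x̄. Then x̄ is a global minimizer of F over X, i.e., F(x̄) ≤ F(x) for all x ∈ X. -/
open MeasureTheory
open scoped RealInnerProductSpace

noncomputable section

/-- `F` is hidden convex on `X` with moduli `μc > 0` and `μH ≥ 0`, witnessed by the convex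
set `U`, the bijection `c : X → U` satisfying `‖c x - c y‖ ≥ μc * ‖x - y‖`, and the
(`μH`-strongly) convex function `H : U → ℝ` with `F = H ∘ c` on `X`, where `H` attains its
minimum over `U` at `ustar`. -/
def HiddenConvex {d : ℕ} (μc μH : ℝ) (X U : Set (EuclideanSpace ℝ (Fin d)))
    (c : EuclideanSpace ℝ (Fin d) → EuclideanSpace ℝ (Fin d)) (H F : EuclideanSpace ℝ (Fin d) → ℝ) (ustar : EuclideanSpace ℝ (Fin d)) : Prop :=
  Convex ℝ U ∧ Set.BijOn c X U ∧
    (∀ x ∈ X, ∀ y ∈ X, μc * ‖x - y‖ ≤ ‖c x - c y‖) ∧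
    (∀ x ∈ X, F x = H (c x)) ∧
    (∀ u ∈ U, ∀ v ∈ U, ∀ t ∈ Set.Icc (0 : ℝ) 1,
      H ((1 - t) • u + t • v) ≤
        (1 - t) * H u + t * H v - (1 - t) * t * μH / 2 * ‖u - v‖ ^ 2) ∧
    ustar ∈ U ∧ ∀ u ∈ U, H ustar ≤ H u

/-- `F` is `ℓ`-weakly convex: `x ↦ F x + ℓ/2 ‖x‖²` is convex on `ℝ^d`. -/
def WeaklyConvex {d : ℕ} (ℓ : ℝ) (F : EuclideanSpace ℝ (Fin d) → ℝ) : Prop :=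
  ConvexOn ℝ Set.univ fun x => F x + ℓ / 2 * ‖x‖ ^ 2

/-- `g` belongs to the Fréchet subdifferential of `Φ = F + δ_X` at `x ∈ X`:
`F y ≥ F x + ⟪g, y - x⟫ + o(‖y - x‖)` as `y → x` within `X`. -/
def FrechetSubdiffAt {d : ℕ} (X : Set (EuclideanSpace ℝ (Fin d))) (F : EuclideanSpace ℝ (Fin d) → ℝ) (x g : EuclideanSpace ℝ (Fin d)) : Prop :=
  ∀ ε > 0, ∀ᶠ y in nhdsWithin x X, F x + ⟪g, y - x⟫ - ε * ‖y - x‖ ≤ F y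

/-!
Since `‖c x - c y‖ ≥ μc ‖x - y‖`, the inverse `c⁻¹ : U → X` is Lipschitz, so `0 ∈ ∂Φ(x̄)` makes
`ū = c x̄` a Fréchet-stationary point of `H` on `U`. For convex `H` and any `v ∈ U`, convexity gives
`H (ū + t (v - ū)) ≤ H ū + t (H v - H ū)`, while stationarity bounds the left side below by
`H ū - o(t)`; hence `H ū ≤ H v`, and `F x̄ = H ū ≤ H (c x) = F x`.
-/

open Filter Topology Set Function AffineMap

theorem HiddenConvex.strongConvexOn {d : ℕ} {μc μH : ℝ} {X U : Set (EuclideanSpace ℝ (Fin d))}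
    {c : EuclideanSpace ℝ (Fin d) → EuclideanSpace ℝ (Fin d)} {H F : EuclideanSpace ℝ (Fin d) → ℝ}
    {ustar : EuclideanSpace ℝ (Fin d)} (h : HiddenConvex μc μH X U c H F ustar) :
    StrongConvexOn U μH H := by
  refine ⟨h.1, fun u hu v hv a b _ hb hab => ?_⟩
  obtain rfl : a = 1 - b := by linarith
  have := h.2.2.2.2.1 u hu v hv b ⟨hb, by linarith⟩
  simp only [smul_eq_mul]
  linarith

/-- `0 ∈ ∂(f + δ_s)(a)` in the Fréchet sense. -/
def IsFrechetStationaryOn {E : Type*} [NormedAddCommGroup E] (s : Set E) (f : E → ℝ) (a : E) :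
    Prop :=
  ∀ ε > 0, ∀ᶠ y in 𝓝[s] a, f a - ε * ‖y - a‖ ≤ f y

theorem frechetSubdiffAt_zero_iff {d : ℕ} {X : Set (EuclideanSpace ℝ (Fin d))}
    {F : EuclideanSpace ℝ (Fin d) → ℝ} {x : EuclideanSpace ℝ (Fin d)} :
    FrechetSubdiffAt X F x 0 ↔ IsFrechetStationaryOn X F x := by
  simp only [FrechetSubdiffAt, IsFrechetStationaryOn, inner_zero_left, add_zero]

/-- `c⁻¹ : U → X` is `μ⁻¹`-Lipschitz, so `o(‖c⁻¹ u - x₀‖) = o(‖u - c x₀‖)`. -/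
theorem IsFrechetStationaryOn.of_eqOn_comp {E V : Type*} [NormedAddCommGroup E]
    [NormedAddCommGroup V] {X : Set E} {U : Set V} {c : E → V} {F : E → ℝ}
    {H : V → ℝ} {μ : ℝ} {x₀ : E} (hμ : 0 < μ) (hc : SurjOn c X U)
    (hlow : ∀ x ∈ X, ∀ y ∈ X, μ * ‖x - y‖ ≤ ‖c x - c y‖) (hF : EqOn F (H ∘ c) X) (hx₀ : x₀ ∈ X)
    (hst : IsFrechetStationaryOn X F x₀) : IsFrechetStationaryOn U H (c x₀) := by
  set g := invFunOn c X
  have hg : ∀ u ∈ U, g u ∈ X ∧ c (g u) = u := fun u hu =>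
    ⟨invFunOn_mem (hc hu), invFunOn_eq (hc hu)⟩
  have hdist : ∀ u ∈ U, μ * ‖g u - x₀‖ ≤ ‖u - c x₀‖ := by
    intro u hu
    simpa only [(hg u hu).2] using hlow _ (hg u hu).1 _ hx₀
  have hlim : Tendsto g (𝓝[U] (c x₀)) (𝓝[X] x₀) := by
    refine tendsto_nhdsWithin_iff.2 ⟨tendsto_iff_norm_sub_tendsto_zero.2 ?_, ?_⟩
    · have hsmall : Tendsto (fun u => ‖u - c x₀‖ / μ) (𝓝[U] (c x₀)) (𝓝 0) := by
        simpa using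
          ((tendsto_id (x := 𝓝 (c x₀))).sub_const (c x₀)).norm.div_const μ |>.mono_left
            nhdsWithin_le_nhds
      refine squeeze_zero' (Eventually.of_forall fun _ => norm_nonneg _) ?_ hsmall
      filter_upwards [self_mem_nhdsWithin] with u hu
      rw [le_div_iff₀ hμ, mul_comm]
      exact hdist u hu
    · filter_upwards [self_mem_nhdsWithin] with u hu using (hg u hu).1
  intro ε hε
  filter_upwards [self_mem_nhdsWithin, hlim.eventually (hst (ε * μ) (by positivity))] with u hu hle
  obtain ⟨hgX, hcg⟩ := hg u hu
  rw [hF hx₀, hF hgX, Function.comp_apply, Function.comp_apply, hcg] at hle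
  calc H (c x₀) - ε * ‖u - c x₀‖ ≤ H (c x₀) - ε * μ * ‖g u - x₀‖ := by
        rw [mul_assoc]; gcongr; exact hdist u hu
    _ ≤ H u := hle

theorem ConvexOn.isMinOn_of_isFrechetStationaryOn {V : Type*} [NormedAddCommGroup V]
    [NormedSpace ℝ V] {U : Set V} {H : V → ℝ} {u₀ : V}
    (hH : ConvexOn ℝ U H) (hu₀ : u₀ ∈ U) (hst : IsFrechetStationaryOn U H u₀) :
    IsMinOn H U u₀ := by
  refine isMinOn_iff.2 fun v hv => ?_
  have hseg : Tendsto (lineMap u₀ v) (𝓝[>] (0 : ℝ)) (𝓝[U] u₀) := by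
    refine tendsto_nhdsWithin_iff.2 ⟨?_, ?_⟩
    · simpa using ((lineMap_continuous (p := u₀) (q := v)).tendsto (0 : ℝ)).mono_left
        nhdsWithin_le_nhds
    · filter_upwards [Ioo_mem_nhdsGT one_pos] with t ht
      exact hH.1.lineMap_mem hu₀ hv ⟨ht.1.le, ht.2.le⟩
  have hslope : ∀ ε > 0, H u₀ - H v ≤ ε * ‖v - u₀‖ := by
    intro ε hε
    obtain ⟨t, ⟨ht₀, ht₁⟩, hle⟩ :=
      (Eventually.and (Ioo_mem_nhdsGT one_pos) (hseg.eventually (hst ε hε))).exists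
    have hconv : H (lineMap u₀ v t) ≤ (1 - t) * H u₀ + t * H v := by
      simpa only [lineMap_apply_module, smul_eq_mul] using
        hH.2 hu₀ hv (by linarith) ht₀.le (by ring)
    have hnorm : ‖lineMap u₀ v t - u₀‖ = t * ‖v - u₀‖ := by
      rw [← dist_eq_norm, dist_lineMap_left, Real.norm_of_nonneg ht₀.le, dist_comm, dist_eq_norm]
    rw [hnorm] at hle
    have : t * (H u₀ - H v) ≤ t * (ε * ‖v - u₀‖) := by nlinarith
    exact le_of_mul_le_mul_left this ht₀
  have hlim : Tendsto (fun ε : ℝ => ε * ‖v - u₀‖) (𝓝[>] 0) (𝓝 0) := by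
    simpa using ((continuous_mul_const ‖v - u₀‖).tendsto 0).mono_left nhdsWithin_le_nhds
  have := ge_of_tendsto hlim (eventually_nhdsWithin_of_forall hslope)
  linarith

theorem stationary_point_is_global_min_general {d : ℕ}
    (X U : Set (EuclideanSpace ℝ (Fin d)))
    (F H : EuclideanSpace ℝ (Fin d) → ℝ) (c : EuclideanSpace ℝ (Fin d) → EuclideanSpace ℝ (Fin d)) (μc μH : ℝ)
    (hμc : 0 < μc) (hμH : 0 ≤ μH) (ustar : EuclideanSpace ℝ (Fin d))
    (hHC : HiddenConvex μc μH X U c H F ustar)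
    (xbar : EuclideanSpace ℝ (Fin d)) (hxbar : xbar ∈ X)
    (hstat : FrechetSubdiffAt X F xbar 0) :
    ∀ x ∈ X, F xbar ≤ F x := by
  have hH : ConvexOn ℝ U H := hHC.strongConvexOn.convexOn fun r => by positivity
  obtain ⟨-, hbij, hlow, hFH, -⟩ := hHC
  have hmin : IsMinOn H U (c xbar) :=
    hH.isMinOn_of_isFrechetStationaryOn (hbij.mapsTo hxbar)
      ((frechetSubdiffAt_zero_iff.1 hstat).of_eqOn_comp hμc hbij.surjOn hlow hFH hxbar)
  intro x hx
  rw [hFH xbar hxbar, hFH x hx]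
  exact hmin (hbij.mapsTo hx)

/-- Proposition 3.1: every stationary point of a weakly convex, hidden convex function
(with `c` differentiable there) is a global minimizer over `X`. -/
theorem stationary_point_is_global_min {d : ℕ}
    (X U : Set (EuclideanSpace ℝ (Fin d))) (hXne : X.Nonempty) (hXcl : IsClosed X) (hXcvx : Convex ℝ X)
    (F H : EuclideanSpace ℝ (Fin d) → ℝ) (c : EuclideanSpace ℝ (Fin d) → EuclideanSpace ℝ (Fin d)) (μc μH ℓ : ℝ)
    (hμc : 0 < μc) (hμH : 0 ≤ μH) (hℓ : 0 ≤ ℓ) (ustar : EuclideanSpace ℝ (Fin d))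
    (hHC : HiddenConvex μc μH X U c H F ustar)
    (hWC : WeaklyConvex ℓ F)
    (xbar : EuclideanSpace ℝ (Fin d)) (hxbar : xbar ∈ X)
    (hstat : FrechetSubdiffAt X F xbar 0)
    (hdiff : DifferentiableWithinAt ℝ c X xbar) :
    ∀ x ∈ X, F xbar ≤ F x :=
  stationary_point_is_global_min_general X U F H c μc μH hμc hμH ustar hHC xbar hxbar hstat
end
end

section
/- Let F be ℓ-weakly convex and hidden convex on X with moduli μ_c > 0 and μ_H ≥ 0, let the map c be continuously differentiable on X, and suppose U = c(X) is bounded with diameter D_U := sup_{u,v ∈ U} ‖u − v‖ > 0. Then for every x ∈ X and every s ∈ ∂Φ(x) (Fréchet subdifferential of Φ := F + δ_X), one has ‖s‖ ≥ (μ_c / D_U)(F(x) − F*), i.e., hidden convexity implies the weak gradient domination property. -/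
/-!
Fix `x ∈ X` and move in the hidden space along the segment from `c x` to the minimizer `u*`.
The point `y_t := c⁻¹((1 - t) c x + t u*)` satisfies `F y_t ≤ F x - t (F x - F*)` by convexity
of `H`, and `‖y_t - x‖ ≤ t D_U / μ_c` because `c` expands distances by at least `μ_c`.
So `F` drops by `t (F x - F*)` over a distance of at most `t D_U / μ_c`, while a Fréchet
subgradient `s` at `x` allows a drop of at most `(‖s‖ + ε)` per unit distance near `x`;
letting `t → 0` and then `ε → 0` gives `F x - F* ≤ ‖s‖ D_U / μ_c`.
-/

open MeasureTheory
open scoped RealInnerProductSpace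

noncomputable section

open Metric Set Filter Topology

namespace FrechetSubdiffAt

variable {d : ℕ} {X : Set (EuclideanSpace ℝ (Fin d))} {F : EuclideanSpace ℝ (Fin d) → ℝ}
  {x s : EuclideanSpace ℝ (Fin d)}

theorem exists_sub_le_mul_norm (hs : FrechetSubdiffAt X F x s) {ε : ℝ} (hε : 0 < ε) :
    ∃ δ > 0, ∀ y ∈ X, ‖y - x‖ < δ → F x - F y ≤ (‖s‖ + ε) * ‖y - x‖ := by
  obtain ⟨δ, hδ, hball⟩ := mem_nhdsWithin_iff.mp (hs ε hε)
  refine ⟨δ, hδ, fun y hy hyx => ?_⟩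
  have hF : F x + ⟪s, y - x⟫ - ε * ‖y - x‖ ≤ F y := hball ⟨mem_ball_iff_norm.mpr hyx, hy⟩
  have hCS : -⟪s, y - x⟫ ≤ ‖s‖ * ‖y - x‖ :=
    (neg_le_abs _).trans (abs_real_inner_le_norm s (y - x))
  linarith

theorem le_norm_mul_of_descent (hs : FrechetSubdiffAt X F x s) {K Δ : ℝ} (hK : 0 ≤ K)
    (hdescent : ∀ t ∈ Ioc (0 : ℝ) 1, ∃ y ∈ X, ‖y - x‖ ≤ t * K ∧ F y + t * Δ ≤ F x) :
    Δ ≤ ‖s‖ * K := by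
  have hlim : Tendsto (fun ε : ℝ => (‖s‖ + ε) * K) (𝓝[>] 0) (𝓝 (‖s‖ * K)) := by
    have : Continuous fun ε : ℝ => (‖s‖ + ε) * K := by fun_prop
    simpa using (this.tendsto 0).mono_left nhdsWithin_le_nhds
  refine ge_of_tendsto hlim (eventually_nhdsWithin_of_forall fun ε (hε : 0 < ε) => ?_)
  obtain ⟨δ, hδ, hsub⟩ := hs.exists_sub_le_mul_norm hε
  set t := min 1 (δ / (K + 1))
  have ht0 : 0 < t := lt_min one_pos (by positivity)
  have htδ : t * K < δ :=
    calc t * K < t * (K + 1) := by gcongr; linarith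
      _ ≤ δ / (K + 1) * (K + 1) := by gcongr; exact min_le_right _ _
      _ = δ := by field_simp
  obtain ⟨y, hy, hyx, hFy⟩ := hdescent t ⟨ht0, min_le_left _ _⟩
  have : t * Δ ≤ t * ((‖s‖ + ε) * K) :=
    calc t * Δ ≤ F x - F y := by linarith
      _ ≤ (‖s‖ + ε) * ‖y - x‖ := hsub y hy (hyx.trans_lt htδ)
      _ ≤ (‖s‖ + ε) * (t * K) := by gcongr
      _ = t * ((‖s‖ + ε) * K) := by ring
  exact le_of_mul_le_mul_left this ht0

end FrechetSubdiffAt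

namespace HiddenConvex

variable {d : ℕ} {μc μH : ℝ} {X U : Set (EuclideanSpace ℝ (Fin d))}
  {c : EuclideanSpace ℝ (Fin d) → EuclideanSpace ℝ (Fin d)} {H F : EuclideanSpace ℝ (Fin d) → ℝ}
  {ustar : EuclideanSpace ℝ (Fin d)}

theorem apply_eq_of_mem (hHC : HiddenConvex μc μH X U c H F ustar)
    {x : EuclideanSpace ℝ (Fin d)} (hx : x ∈ X) : F x = H (c x) :=
  hHC.2.2.2.1 x hx

theorem exists_descent_point (hHC : HiddenConvex μc μH X U c H F ustar) (hμc : 0 < μc)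
    (hμH : 0 ≤ μH) (hUbdd : Bornology.IsBounded U) {x : EuclideanSpace ℝ (Fin d)} (hx : x ∈ X)
    {t : ℝ} (ht : t ∈ Icc (0 : ℝ) 1) :
    ∃ y ∈ X, ‖y - x‖ ≤ t * (diam U / μc) ∧ F y + t * (F x - H ustar) ≤ F x := by
  obtain ⟨hU, hBij, hexpand, hFH, hHcvx, hust, -⟩ := hHC
  have hcx : c x ∈ U := hBij.mapsTo hx
  have h1t : 0 ≤ 1 - t := sub_nonneg.mpr ht.2
  obtain ⟨y, hy, hcy⟩ := hBij.surjOn (hU hcx hust h1t ht.1 (sub_add_cancel 1 t))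
  refine ⟨y, hy, ?_, ?_⟩
  · have hdist : ‖c y - c x‖ = t * ‖ustar - c x‖ := by
      rw [hcy, show (1 - t) • c x + t • ustar - c x = t • (ustar - c x) by module, norm_smul,
        Real.norm_of_nonneg ht.1]
    have hdiam : ‖ustar - c x‖ ≤ diam U := by
      rw [← dist_eq_norm]; exact dist_le_diam_of_mem hUbdd hust hcx
    rw [← mul_div_assoc, le_div_iff₀ hμc, mul_comm]
    calc μc * ‖y - x‖ ≤ ‖c y - c x‖ := hexpand y hy x hx
      _ = t * ‖ustar - c x‖ := hdist
      _ ≤ t * diam U := by gcongr; exact ht.1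
  · have hstrong : 0 ≤ (1 - t) * t * μH / 2 * ‖c x - ustar‖ ^ 2 := by
      have := sub_nonneg.mpr ht.2
      have := ht.1
      positivity
    have hH := hHcvx (c x) hcx ustar hust t ht
    rw [hFH y hy, hcy, hFH x hx]
    linarith

end HiddenConvex

theorem weak_gradient_domination_general {d : ℕ}
    (X U : Set (EuclideanSpace ℝ (Fin d)))
    (F H : EuclideanSpace ℝ (Fin d) → ℝ) (c : EuclideanSpace ℝ (Fin d) → EuclideanSpace ℝ (Fin d))
    (μc μH DU : ℝ) (hμc : 0 < μc) (hμH : 0 ≤ μH)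
    (ustar xstar : EuclideanSpace ℝ (Fin d))
    (hHC : HiddenConvex μc μH X U c H F ustar)
    (hUbdd : Bornology.IsBounded U) (hDU : DU = Metric.diam U) (hDUpos : 0 < DU)
    (hxstar : xstar ∈ X) (hcxstar : c xstar = ustar) :
    ∀ x ∈ X, ∀ s : EuclideanSpace ℝ (Fin d), FrechetSubdiffAt X F x s →
      μc / DU * (F x - F xstar) ≤ ‖s‖ := by
  intro x hx s hs
  have hdom : F x - F xstar ≤ ‖s‖ * (DU / μc) := by
    rw [hHC.apply_eq_of_mem hxstar, hcxstar, hDU]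
    exact hs.le_norm_mul_of_descent (div_nonneg diam_nonneg hμc.le) fun t ht =>
      hHC.exists_descent_point hμc hμH hUbdd hx (Ioc_subset_Icc_self ht)
  calc μc / DU * (F x - F xstar) ≤ μc / DU * (‖s‖ * (DU / μc)) := by gcongr
    _ = ‖s‖ := by field_simp

/-- Proposition 3.2 (i): hidden convexity implies weak gradient domination. -/
theorem weak_gradient_domination {d : ℕ}
    (X U : Set (EuclideanSpace ℝ (Fin d))) (hXne : X.Nonempty) (hXcl : IsClosed X) (hXcvx : Convex ℝ X)
    (F H : EuclideanSpace ℝ (Fin d) → ℝ) (c : EuclideanSpace ℝ (Fin d) → EuclideanSpace ℝ (Fin d))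
    (c' : EuclideanSpace ℝ (Fin d) → EuclideanSpace ℝ (Fin d) →L[ℝ] EuclideanSpace ℝ (Fin d))
    (μc μH ℓ DU : ℝ) (hμc : 0 < μc) (hμH : 0 ≤ μH) (hℓ : 0 ≤ ℓ)
    (ustar xstar : EuclideanSpace ℝ (Fin d))
    (hHC : HiddenConvex μc μH X U c H F ustar)
    (hWC : WeaklyConvex ℓ F)
    (hderiv : ∀ x ∈ X, HasFDerivWithinAt c (c' x) X x)
    (hc'cont : ContinuousOn c' X)
    (hUbdd : Bornology.IsBounded U) (hDU : DU = Metric.diam U) (hDUpos : 0 < DU)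
    (hxstar : xstar ∈ X) (hcxstar : c xstar = ustar) :
    ∀ x ∈ X, ∀ s : EuclideanSpace ℝ (Fin d), FrechetSubdiffAt X F x s →
      μc / DU * (F x - F xstar) ≤ ‖s‖ :=
  weak_gradient_domination_general X U F H c μc μH DU hμc hμH ustar xstar hHC hUbdd hDU hDUpos
    hxstar hcxstar
end
end

section
/- Let X have nonempty interior, let F be ℓ-weakly convex and (μ_c, μ_H)-hidden strongly convex on X with μ_H > 0, and let the map c be continuously differentiable on X. Then for every x ∈ X and every s ∈ ∂Φ(x) (Fréchet subdifferential of Φ := F + δ_X), one has ‖s‖² ≥ 2 μ_H μ_c² (F(x) − F*), i.e., hidden strong convexity implies the strong gradient domination (Polyak–Łojasiewicz type) property. -/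
/-!
Write `u = c x` and `D = ‖u - c x⋆‖`. Moving `u` a fraction `t` of the way towards `c x⋆` inside
the convex set `U` and pulling back by `c` gives points `xₜ ∈ X` with `‖xₜ - x‖ ≤ t D / μc`. The
subgradient `s` bounds the decrease of `F` along them from below by `‖s‖ t D / μc + o(t)`, while
`μH`-strong convexity of `H` bounds it from above by `t (F x - F⋆) + (1 - t) t μH D² / 2`.
Dividing by `t → 0` gives `F x - F⋆ ≤ ‖s‖ D / μc - μH D² / 2`, and maximizing the right-hand side
over `D` yields `F x - F⋆ ≤ ‖s‖² / (2 μH μc²)`.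
-/

open MeasureTheory
open scoped RealInnerProductSpace

noncomputable section

open Filter Function Set Topology

section HiddenConvexity

variable {E V : Type*} [NormedAddCommGroup E] [NormedAddCommGroup V] [NormedSpace ℝ V]
  {X : Set E} {U : Set V} {c : E → V} {F : E → ℝ} {H : V → ℝ} {μc μH K : ℝ} {x : E} {v : V}

theorem invFunOn_segment_mem_and_eq (hU : Convex ℝ U) (hsurj : SurjOn c X U) (hcx : c x ∈ U)
    (hv : v ∈ U) {t : ℝ} (ht : t ∈ Icc (0 : ℝ) 1) :
    invFunOn c X ((1 - t) • c x + t • v) ∈ X ∧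
      c (invFunOn c X ((1 - t) • c x + t • v)) = (1 - t) • c x + t • v :=
  invFunOn_pos (hsurj (hU hcx hv (by linarith [ht.2]) ht.1 (by ring)))

theorem mul_norm_invFunOn_segment_sub_le (hU : Convex ℝ U) (hsurj : SurjOn c X U)
    (hanti : ∀ x ∈ X, ∀ y ∈ X, μc * ‖x - y‖ ≤ ‖c x - c y‖) (hx : x ∈ X) (hcx : c x ∈ U)
    (hv : v ∈ U) {t : ℝ} (ht : t ∈ Icc (0 : ℝ) 1) :
    μc * ‖invFunOn c X ((1 - t) • c x + t • v) - x‖ ≤ t * ‖c x - v‖ := by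
  obtain ⟨hmem, heq⟩ := invFunOn_segment_mem_and_eq hU hsurj hcx hv ht
  calc μc * ‖invFunOn c X ((1 - t) • c x + t • v) - x‖
      ≤ ‖c (invFunOn c X ((1 - t) • c x + t • v)) - c x‖ := hanti _ hmem x hx
    _ = t * ‖c x - v‖ := by
      rw [heq, show (1 - t) • c x + t • v - c x = t • (v - c x) by module, norm_smul,
        Real.norm_of_nonneg ht.1, norm_sub_rev]

theorem tendsto_invFunOn_segment (hμc : 0 < μc) (hU : Convex ℝ U) (hsurj : SurjOn c X U)
    (hanti : ∀ x ∈ X, ∀ y ∈ X, μc * ‖x - y‖ ≤ ‖c x - c y‖) (hx : x ∈ X) (hcx : c x ∈ U)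
    (hv : v ∈ U) :
    Tendsto (fun t : ℝ ↦ invFunOn c X ((1 - t) • c x + t • v)) (𝓝[>] 0) (𝓝[X] x) := by
  have hIcc : Icc (0 : ℝ) 1 ∈ 𝓝[>] 0 :=
    mem_of_superset (Ioc_mem_nhdsGT one_pos) Ioc_subset_Icc_self
  refine tendsto_nhdsWithin_iff.2 ⟨?_, eventually_of_mem hIcc fun t ht ↦
    (invFunOn_segment_mem_and_eq hU hsurj hcx hv ht).1⟩
  have hbound : Tendsto (fun t : ℝ ↦ t * ‖c x - v‖ / μc) (𝓝[>] 0) (𝓝 0) := by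
    refine tendsto_nhdsWithin_of_tendsto_nhds ?_
    simpa using ((continuous_id.mul continuous_const).div_const μc).tendsto (0 : ℝ)
  refine tendsto_iff_norm_sub_tendsto_zero.2 (squeeze_zero' (Eventually.of_forall fun _ ↦
    norm_nonneg _) (eventually_of_mem hIcc fun t ht ↦ ?_) hbound)
  rw [le_div_iff₀ hμc, mul_comm]
  exact mul_norm_invFunOn_segment_sub_le hU hsurj hanti hx hcx hv ht

theorem mul_sub_le_of_hiddenStronglyConvex (hμc : 0 < μc) (hK : 0 ≤ K)
    (hU : Convex ℝ U) (hsurj : SurjOn c X U)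
    (hanti : ∀ x ∈ X, ∀ y ∈ X, μc * ‖x - y‖ ≤ ‖c x - c y‖) (hFH : ∀ x ∈ X, F x = H (c x))
    (hH : ∀ u ∈ U, ∀ v ∈ U, ∀ t ∈ Icc (0 : ℝ) 1,
      H ((1 - t) • u + t • v) ≤ (1 - t) * H u + t * H v - (1 - t) * t * μH / 2 * ‖u - v‖ ^ 2)
    (hx : x ∈ X) (hcx : c x ∈ U) (hv : v ∈ U)
    (hlow : ∀ ε > 0, ∀ᶠ y in 𝓝[X] x, F x - (K + ε) * ‖y - x‖ ≤ F y) :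
    μc * (F x - H v) ≤ K * ‖c x - v‖ - μc * μH / 2 * ‖c x - v‖ ^ 2 := by
  set D := ‖c x - v‖
  have hε : ∀ ε > 0, μc * (F x - H v) ≤ (K + ε) * D - μc * μH / 2 * D ^ 2 := by
    intro ε hε
    refine ge_of_tendsto (x := 𝓝[>] (0 : ℝ))
      (f := fun t : ℝ ↦ (K + ε) * D - (1 - t) * (μc * μH / 2 * D ^ 2))
      (tendsto_nhdsWithin_of_tendsto_nhds ?_) ?_
    · exact Continuous.tendsto' (by fun_prop) _ _ (by simp)
    filter_upwards [(tendsto_invFunOn_segment hμc hU hsurj hanti hx hcx hv).eventually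
      (hlow ε hε), Ioc_mem_nhdsGT one_pos] with t hFy ht
    have ht' : t ∈ Icc (0 : ℝ) 1 := Ioc_subset_Icc_self ht
    obtain ⟨hy, hcy⟩ := invFunOn_segment_mem_and_eq hU hsurj hcx hv ht'
    have hnorm := mul_norm_invFunOn_segment_sub_le hU hsurj hanti hx hcx hv ht'
    have hHy := hH _ hcx v hv t ht'
    rw [← hcy, ← hFH _ hy, ← hFH x hx] at hHy
    refine le_of_mul_le_mul_left ?_ ht.1
    nlinarith [mul_le_mul_of_nonneg_left hnorm (by positivity : 0 ≤ K + ε)]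
  refine ge_of_tendsto (x := 𝓝[>] (0 : ℝ)) (f := fun ε : ℝ ↦ (K + ε) * D - μc * μH / 2 * D ^ 2)
    (tendsto_nhdsWithin_of_tendsto_nhds ?_) (eventually_mem_nhdsWithin.mono hε)
  exact Continuous.tendsto' (by fun_prop) _ _ (by simp)

end HiddenConvexity

theorem FrechetSubdiffAt.eventually_sub_mul_norm_le {d : ℕ} {X : Set (EuclideanSpace ℝ (Fin d))}
    {F : EuclideanSpace ℝ (Fin d) → ℝ} {x s : EuclideanSpace ℝ (Fin d)}
    (hs : FrechetSubdiffAt X F x s) (ε : ℝ) (hε : 0 < ε) :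
    ∀ᶠ y in 𝓝[X] x, F x - (‖s‖ + ε) * ‖y - x‖ ≤ F y := by
  filter_upwards [hs ε hε] with y hy
  linarith [neg_le_of_abs_le (abs_real_inner_le_norm s (y - x))]

theorem strong_gradient_domination_general {d : ℕ}
    (X U : Set (EuclideanSpace ℝ (Fin d)))
    (F H : EuclideanSpace ℝ (Fin d) → ℝ) (c : EuclideanSpace ℝ (Fin d) → EuclideanSpace ℝ (Fin d))
    (μc μH : ℝ) (hμc : 0 < μc) (hμH : 0 < μH)
    (ustar xstar : EuclideanSpace ℝ (Fin d))
    (hHC : HiddenConvex μc μH X U c H F ustar)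
    (hxstar : xstar ∈ X) (hcxstar : c xstar = ustar) :
    ∀ x ∈ X, ∀ s : EuclideanSpace ℝ (Fin d), FrechetSubdiffAt X F x s →
      2 * μH * μc ^ 2 * (F x - F xstar) ≤ ‖s‖ ^ 2 := by
  obtain ⟨hU, hbij, hanti, hFH, hH, hustar, -⟩ := hHC
  intro x hx s hs
  have hdecrease : μc * (F x - F xstar) ≤
      ‖s‖ * ‖c x - ustar‖ - μc * μH / 2 * ‖c x - ustar‖ ^ 2 := by
    rw [hFH xstar hxstar, hcxstar]
    exact mul_sub_le_of_hiddenStronglyConvex hμc (norm_nonneg s) hU hbij.surjOn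
      hanti hFH hH hx (hbij.mapsTo hx) hustar hs.eventually_sub_mul_norm_le
  -- `‖s‖ D ≤ ‖s‖² / (2 μH μc) + μH μc D² / 2`
  nlinarith [sq_nonneg (‖s‖ - μH * μc * ‖c x - ustar‖),
    mul_le_mul_of_nonneg_left hdecrease (by positivity : 0 ≤ 2 * μH * μc)]

/-- Proposition 3.2 (ii): hidden strong convexity implies strong gradient domination (PL). -/
theorem strong_gradient_domination {d : ℕ}
    (X U : Set (EuclideanSpace ℝ (Fin d))) (hXne : X.Nonempty) (hXcl : IsClosed X) (hXcvx : Convex ℝ X)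
    (hXint : (interior X).Nonempty)
    (F H : EuclideanSpace ℝ (Fin d) → ℝ) (c : EuclideanSpace ℝ (Fin d) → EuclideanSpace ℝ (Fin d))
    (c' : EuclideanSpace ℝ (Fin d) → EuclideanSpace ℝ (Fin d) →L[ℝ] EuclideanSpace ℝ (Fin d))
    (μc μH ℓ : ℝ) (hμc : 0 < μc) (hμH : 0 < μH) (hℓ : 0 ≤ ℓ)
    (ustar xstar : EuclideanSpace ℝ (Fin d))
    (hHC : HiddenConvex μc μH X U c H F ustar)
    (hWC : WeaklyConvex ℓ F)
    (hderiv : ∀ x ∈ X, HasFDerivWithinAt c (c' x) X x)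
    (hc'cont : ContinuousOn c' X)
    (hxstar : xstar ∈ X) (hcxstar : c xstar = ustar) :
    ∀ x ∈ X, ∀ s : EuclideanSpace ℝ (Fin d), FrechetSubdiffAt X F x s →
      2 * μH * μc ^ 2 * (F x - F xstar) ≤ ‖s‖ ^ 2 :=
  strong_gradient_domination_general X U F H c μc μH hμc hμH ustar xstar hHC hxstar hcxstar
end
end

section
/- Let F : ℝ^d → ℝ be ℓ-weakly convex with ℓ > 0 and hidden convex on X with modulus μ_c > 0 and μ_H = 0, and suppose U = c(X) is bounded with diameter D_U > 0. Let (x^t)_{t≥0} be the projected stochastic subgradient iterates with step-size 0 < η ≤ 1/(2ℓ) and oracle bound G_F, set ρ = 2ℓ and Λ_t := E[Φ_{1/ρ}(x^t)] − F*. Then for every α with 0 < α ≤ ηℓ and every T ≥ 0: Λ_T ≤ (1 − α)^T Λ_0 + 3 D_U² α/(2 μ_c² η) + 8 ℓ η² G_F² / α. -/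
open MeasureTheory
open scoped RealInnerProductSpace

noncomputable section

/-- `q` is the Euclidean projection of `p` onto `X`. -/
def IsProjection {d : ℕ} (X : Set (EuclideanSpace ℝ (Fin d))) (p q : EuclideanSpace ℝ (Fin d)) : Prop :=
  q ∈ X ∧ ∀ y ∈ X, ‖q - p‖ ≤ ‖y - p‖

/-- The subdifferential of an `ℓ`-weakly convex function `F` at `x`. -/
def WCSubdiff {d : ℕ} (ℓ : ℝ) (F : EuclideanSpace ℝ (Fin d) → ℝ) (x : EuclideanSpace ℝ (Fin d)) : Set (EuclideanSpace ℝ (Fin d)) :=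
  {g | ∀ y, F x + ⟪g, y - x⟫ - ℓ / 2 * ‖y - x‖ ^ 2 ≤ F y}

/-- The Moreau envelope `Φ_{1/ρ}` of `Φ = F + δ_X`. -/
def MoreauEnv {d : ℕ} (X : Set (EuclideanSpace ℝ (Fin d))) (F : EuclideanSpace ℝ (Fin d) → ℝ) (ρ : ℝ) (x : EuclideanSpace ℝ (Fin d)) : ℝ :=
  sInf ((fun y => F y + ρ / 2 * ‖y - x‖ ^ 2) '' X)

/-- The filtration `𝔉_t := σ(g^0, …, g^(t-1))` generated by the stochastic oracle outputs. -/
def sgdFiltration {Ω : Type} [MeasurableSpace Ω] {d : ℕ}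
    (g : ℕ → Ω → EuclideanSpace ℝ (Fin d)) (t : ℕ) : MeasurableSpace Ω :=
  ⨆ i ∈ Finset.range t, MeasurableSpace.comap (g i) inferInstance

/-!
The Lyapunov function is the Moreau envelope `Φ = MoreauEnv X F (2ℓ)`. Since `F` is `ℓ`-weakly
convex, the prox objective `F + ℓ‖· - z‖²` is `ℓ`-strongly convex, so its minimizer `ẑ` over the
compact set `X` exists, depends continuously on `z`, and the objective grows quadratically away
from it. Comparing `Φ(x^{t+1})` with the prox objective at the old proximal point `x̂^t`, and
using that projecting onto `X` moves no point farther from `x̂^t ∈ X`, gives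
`Φ(x^{t+1}) ≤ Φ(x^t) + 2ℓη⟪g^t, x̂^t - x^t⟫ + ℓη²‖g^t‖²`; in expectation `g^t` may be replaced
by a subgradient at `x^t`. Hidden convexity enters by testing the envelope at
`c⁻¹((1 - θ) c(x̂) + θ u*)` with `θ = α / (2ℓη)`: this point lies within `θ D_U / μc` of `x̂`,
and `F` is at most `(1 - θ) F(x̂) + θ F*` there. This yields the contraction
`Λ_{t+1} ≤ (1 - α) Λ_t + 3 D_U² α² / (2 μc² η) + ℓ η² G_F²`, which unrolls to the bound.
-/

open Filter Topology

theorem le_pow_mul_add_div_of_le_mul_add {u : ℕ → ℝ} {α C : ℝ} (hα : 0 < α) (hα1 : α ≤ 1)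
    (hC : 0 ≤ C) (h : ∀ n, u (n + 1) ≤ (1 - α) * u n + C) (n : ℕ) :
    u n ≤ (1 - α) ^ n * u 0 + C / α := by
  induction n with
  | zero => simpa using div_nonneg hC hα.le
  | succ n ih =>
    calc u (n + 1) ≤ (1 - α) * ((1 - α) ^ n * u 0 + C / α) + C :=
          (h n).trans (by gcongr)
      _ = (1 - α) ^ (n + 1) * u 0 + C / α := by field_simp; ring

section StrongConvexity

variable {E : Type*} [NormedAddCommGroup E] [NormedSpace ℝ E]

theorem StrongConvexOn.add_sq_le_of_isMinOn {s : Set E} {m : ℝ} {f : E → ℝ} {w y : E}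
    (hf : StrongConvexOn s m f) (hw : w ∈ s) (hmin : IsMinOn f s w) (hy : y ∈ s) :
    f w + m / 2 * ‖y - w‖ ^ 2 ≤ f y := by
  generalize hc : m / 2 * ‖y - w‖ ^ 2 = c
  have hseg : ∀ t ∈ Set.Ioc (0 : ℝ) 1, f w + (1 - t) * c ≤ f y := by
    rintro t ⟨ht0, ht1⟩
    have hconv := hf.2 hw hy (sub_nonneg.2 ht1) ht0.le (sub_add_cancel 1 t)
    have hmin' := hmin (hf.1 hw hy (sub_nonneg.2 ht1) ht0.le (sub_add_cancel 1 t))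
    simp only [smul_eq_mul, norm_sub_rev w y, hc] at hconv
    refine le_of_mul_le_mul_left ?_ ht0
    linarith [hmin'.out]
  have hlim : Tendsto (fun t : ℝ => f w + (1 - t) * c) (𝓝[>] 0) (𝓝 (f w + c)) := by
    have : Continuous fun t : ℝ => f w + (1 - t) * c := by fun_prop
    simpa using (this.tendsto 0).mono_left nhdsWithin_le_nhds
  exact le_of_tendsto hlim (Filter.mem_of_superset (Ioc_mem_nhdsGT one_pos) hseg)

end StrongConvexity

section Prox

variable {d : ℕ} {X : Set (EuclideanSpace ℝ (Fin d))} {F : EuclideanSpace ℝ (Fin d) → ℝ}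
  {ℓ ρ : ℝ}

theorem WeaklyConvex.continuous (hF : WeaklyConvex ℓ F) : Continuous F := by
  have h : Continuous fun x => F x + ℓ / 2 * ‖x‖ ^ 2 :=
    continuousOn_univ.1 (hF.continuousOn isOpen_univ)
  exact (h.sub (continuous_const.mul (continuous_norm.pow 2))).congr fun x =>
    add_sub_cancel_right _ _

theorem WeaklyConvex.strongConvexOn_add_sq (hF : WeaklyConvex ℓ F) (hX : Convex ℝ X)
    (z : EuclideanSpace ℝ (Fin d)) :
    StrongConvexOn X (ρ - ℓ) fun y => F y + ρ / 2 * ‖y - z‖ ^ 2 := by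
  rw [strongConvexOn_iff_convex]
  have haff : ConvexOn ℝ X fun y => innerSL ℝ (-ρ • z) y + ρ / 2 * ‖z‖ ^ 2 :=
    ((innerSL ℝ (-ρ • z)).toLinearMap.convexOn hX).add_const _
  refine ((hF.subset (Set.subset_univ X) hX).add haff).congr fun y _ => ?_
  simp only [Pi.add_apply, innerSL_apply_apply, inner_smul_left, norm_sub_sq_real,
    real_inner_comm z y, RCLike.conj_to_real]
  ring

theorem WeaklyConvex.add_sq_le_of_isMinOn (hF : WeaklyConvex ℓ F) (hX : Convex ℝ X)
    {z w y : EuclideanSpace ℝ (Fin d)} (hw : w ∈ X)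
    (hmin : IsMinOn (fun y => F y + ρ / 2 * ‖y - z‖ ^ 2) X w) (hy : y ∈ X) :
    F w + ρ / 2 * ‖w - z‖ ^ 2 + (ρ - ℓ) / 2 * ‖y - w‖ ^ 2 ≤ F y + ρ / 2 * ‖y - z‖ ^ 2 :=
  (hF.strongConvexOn_add_sq hX z).add_sq_le_of_isMinOn hw hmin hy

theorem WeaklyConvex.norm_sub_le_of_isMinOn (hF : WeaklyConvex ℓ F) (hX : Convex ℝ X)
    (hρ : 0 ≤ ρ) {z z' w w' : EuclideanSpace ℝ (Fin d)} (hw : w ∈ X) (hw' : w' ∈ X)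
    (hmin : IsMinOn (fun y => F y + ρ / 2 * ‖y - z‖ ^ 2) X w)
    (hmin' : IsMinOn (fun y => F y + ρ / 2 * ‖y - z'‖ ^ 2) X w') :
    (ρ - ℓ) * ‖w - w'‖ ≤ ρ * ‖z - z'‖ := by
  have h := hF.add_sq_le_of_isMinOn hX hw hmin hw'
  have h' := hF.add_sq_le_of_isMinOn hX hw' hmin' hw
  have hcross : ‖w' - z‖ ^ 2 + ‖w - z'‖ ^ 2 - ‖w - z‖ ^ 2 - ‖w' - z'‖ ^ 2
      = 2 * ⟪w - w', z - z'⟫ := by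
    simp only [norm_sub_sq_real, inner_sub_left, inner_sub_right]
    ring
  have hsq : (ρ - ℓ) * ‖w - w'‖ ^ 2 ≤ ρ * (‖w - w'‖ * ‖z - z'‖) := by
    rw [norm_sub_rev w' w] at h
    nlinarith [real_inner_le_norm (w - w') (z - z')]
  rcases (norm_nonneg (w - w')).eq_or_lt with h0 | hpos
  · rw [← h0, mul_zero]
    positivity
  · nlinarith

theorem WeaklyConvex.exists_continuous_isMinOn (hF : WeaklyConvex ℓ F) (hXc : IsCompact X)
    (hXne : X.Nonempty) (hX : Convex ℝ X) (hℓρ : ℓ < ρ) (hρ : 0 ≤ ρ) :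
    ∃ prox : EuclideanSpace ℝ (Fin d) → EuclideanSpace ℝ (Fin d), Continuous prox ∧
      ∀ z, prox z ∈ X ∧ IsMinOn (fun y => F y + ρ / 2 * ‖y - z‖ ^ 2) X (prox z) := by
  have hex : ∀ z, ∃ w ∈ X, IsMinOn (fun y => F y + ρ / 2 * ‖y - z‖ ^ 2) X w := fun z =>
    hXc.exists_isMinOn hXne (by have := hF.continuous; fun_prop)
  choose prox hproxX hproxmin using hex
  refine ⟨prox, ?_, fun z => ⟨hproxX z, hproxmin z⟩⟩
  refine (LipschitzWith.of_dist_le' (K := ρ / (ρ - ℓ)) fun z z' => ?_).continuous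
  rw [dist_eq_norm, dist_eq_norm, div_mul_eq_mul_div, le_div_iff₀' (sub_pos.2 hℓρ)]
  exact hF.norm_sub_le_of_isMinOn hX hρ (hproxX z) (hproxX z') (hproxmin z) (hproxmin z')

theorem moreauEnv_eq_of_isMinOn {z w : EuclideanSpace ℝ (Fin d)} (hw : w ∈ X)
    (hmin : IsMinOn (fun y => F y + ρ / 2 * ‖y - z‖ ^ 2) X w) :
    MoreauEnv X F ρ z = F w + ρ / 2 * ‖w - z‖ ^ 2 :=
  IsLeast.csInf_eq ⟨⟨w, hw, rfl⟩, by rintro _ ⟨y, hy, rfl⟩; exact hmin hy⟩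

theorem continuous_moreauEnv {prox : EuclideanSpace ℝ (Fin d) → EuclideanSpace ℝ (Fin d)}
    (hF : Continuous F) (hprox : Continuous prox)
    (hmin : ∀ z, prox z ∈ X ∧ IsMinOn (fun y => F y + ρ / 2 * ‖y - z‖ ^ 2) X (prox z)) :
    Continuous (MoreauEnv X F ρ) := by
  have henv : MoreauEnv X F ρ = fun z => F (prox z) + ρ / 2 * ‖prox z - z‖ ^ 2 :=
    funext fun z => moreauEnv_eq_of_isMinOn (hmin z).1 (hmin z).2
  rw [henv]
  fun_prop

theorem IsProjection.norm_sub_le (hX : Convex ℝ X) {p q y : EuclideanSpace ℝ (Fin d)}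
    (h : IsProjection X p q) (hy : y ∈ X) : ‖y - q‖ ≤ ‖y - p‖ := by
  have : Nonempty X := ⟨⟨q, h.1⟩⟩
  have hinf : ‖p - q‖ = ⨅ w : X, ‖p - w‖ := by
    refine le_antisymm (le_ciInf fun w => ?_) ?_
    · rw [norm_sub_rev p q, norm_sub_rev p w]
      exact h.2 w w.2
    · have hbdd : BddBelow (Set.range fun w : X => ‖p - w‖) :=
        ⟨0, fun _ ⟨_, hw⟩ => hw ▸ norm_nonneg _⟩
      exact ciInf_le hbdd ⟨q, h.1⟩
  have hobtuse := (norm_eq_iInf_iff_real_inner_le_zero hX h.1).1 hinf y hy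
  have hexpand : ‖y - p‖ ^ 2 = ‖y - q‖ ^ 2 - 2 * ⟪p - q, y - q⟫ + ‖p - q‖ ^ 2 := by
    rw [show y - p = (y - q) - (p - q) by abel, norm_sub_sq_real, real_inner_comm]
  refine (pow_le_pow_iff_left₀ (norm_nonneg _) (norm_nonneg _) two_ne_zero).1 ?_
  nlinarith [sq_nonneg ‖p - q‖]

theorem moreauEnv_le_of_isProjection (hX : Convex ℝ X) (hρ : 0 ≤ ρ)
    {z z' w w' g : EuclideanSpace ℝ (Fin d)} {η : ℝ} (hw : w ∈ X)
    (hmin : IsMinOn (fun y => F y + ρ / 2 * ‖y - z‖ ^ 2) X w) (hw' : w' ∈ X)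
    (hmin' : IsMinOn (fun y => F y + ρ / 2 * ‖y - z'‖ ^ 2) X w')
    (hproj : IsProjection X (z - η • g) z') :
    MoreauEnv X F ρ z' ≤ MoreauEnv X F ρ z + ρ * η * ⟪g, w - z⟫ + ρ * η ^ 2 / 2 * ‖g‖ ^ 2 := by
  rw [moreauEnv_eq_of_isMinOn hw' hmin', moreauEnv_eq_of_isMinOn hw hmin]
  have hcmp := isMinOn_iff.1 hmin' w hw
  have hnonexp := pow_le_pow_left₀ (norm_nonneg _) (hproj.norm_sub_le hX hw) 2
  have hexpand : ‖w - (z - η • g)‖ ^ 2 = ‖w - z‖ ^ 2 + 2 * η * ⟪g, w - z⟫ + η ^ 2 * ‖g‖ ^ 2 := by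
    rw [show w - (z - η • g) = (w - z) + η • g by abel, norm_add_sq_real, real_inner_smul_right,
      norm_smul, mul_pow, Real.norm_eq_abs, sq_abs, real_inner_comm]
    ring
  nlinarith

end Prox

section HiddenConvexity

variable {d : ℕ} {μc μH : ℝ} {X U : Set (EuclideanSpace ℝ (Fin d))}
  {c : EuclideanSpace ℝ (Fin d) → EuclideanSpace ℝ (Fin d)} {H F : EuclideanSpace ℝ (Fin d) → ℝ}
  {ustar xstar : EuclideanSpace ℝ (Fin d)}

theorem HiddenConvex.norm_sub_le (hHC : HiddenConvex μc μH X U c H F ustar) (hμc : 0 < μc)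
    (hU : Bornology.IsBounded U) {a b : EuclideanSpace ℝ (Fin d)} (ha : a ∈ X) (hb : b ∈ X) :
    ‖a - b‖ ≤ Metric.diam U / μc := by
  rw [le_div_iff₀' hμc]
  exact (hHC.2.2.1 a ha b hb).trans <| by
    rw [← dist_eq_norm]
    exact Metric.dist_le_diam_of_mem hU (hHC.2.1.mapsTo ha) (hHC.2.1.mapsTo hb)

theorem HiddenConvex.isCompact (hHC : HiddenConvex μc μH X U c H F ustar) (hμc : 0 < μc)
    (hU : Bornology.IsBounded U) (hX : IsClosed X) : IsCompact X :=
  Metric.isCompact_of_isClosed_isBounded hX <| Metric.isBounded_iff.2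
    ⟨_, fun _ ha _ hb => (dist_eq_norm _ _).trans_le (hHC.norm_sub_le hμc hU ha hb)⟩

/-- The witness is `c⁻¹((1 - θ) c(w) + θ u*)`. -/
theorem HiddenConvex.exists_close_le_convexComb
    (hHC : HiddenConvex μc μH X U c H F ustar) (hμH : 0 ≤ μH) (hμc : 0 < μc)
    (hU : Bornology.IsBounded U) (hxstar : xstar ∈ X) (hcxstar : c xstar = ustar)
    {w : EuclideanSpace ℝ (Fin d)} (hw : w ∈ X) {θ : ℝ} (hθ0 : 0 ≤ θ) (hθ1 : θ ≤ 1) :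
    ∃ y ∈ X, F y ≤ (1 - θ) * F w + θ * F xstar ∧ ‖y - w‖ ≤ θ * (Metric.diam U / μc) := by
  obtain ⟨hUcvx, hbij, hexp, hFH, hH, hustar, -⟩ := hHC
  have hcw := hbij.mapsTo hw
  obtain ⟨y, hy, hcy⟩ :=
    hbij.surjOn (hUcvx hcw hustar (sub_nonneg.2 hθ1) hθ0 (sub_add_cancel 1 θ))
  refine ⟨y, hy, ?_, ?_⟩
  · rw [hFH y hy, hcy, hFH w hw, hFH xstar hxstar, hcxstar]
    have hpen : 0 ≤ (1 - θ) * θ * μH / 2 * ‖c w - ustar‖ ^ 2 := by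
      have := sub_nonneg.2 hθ1
      positivity
    linarith [hH _ hcw _ hustar θ ⟨hθ0, hθ1⟩]
  · rw [← mul_div_assoc, le_div_iff₀' hμc]
    calc μc * ‖y - w‖ ≤ ‖c y - c w‖ := hexp y hy w hw
      _ = θ * ‖ustar - c w‖ := by
        rw [hcy, show (1 - θ) • c w + θ • ustar - c w = θ • (ustar - c w) by module, norm_smul,
          Real.norm_of_nonneg hθ0]
      _ ≤ θ * Metric.diam U := by
        gcongr
        rw [← dist_eq_norm]
        exact Metric.dist_le_diam_of_mem hU hustar hcw

theorem HiddenConvex.sub_le_of_isMinOn (hHC : HiddenConvex μc μH X U c H F ustar)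
    (hμH : 0 ≤ μH) (hμc : 0 < μc) (hU : Bornology.IsBounded U) (hxstar : xstar ∈ X)
    (hcxstar : c xstar = ustar) {ρ : ℝ} (hρ : 0 ≤ ρ) {z w : EuclideanSpace ℝ (Fin d)}
    (hw : w ∈ X) (hmin : IsMinOn (fun y => F y + ρ / 2 * ‖y - z‖ ^ 2) X w) {θ : ℝ}
    (hθ0 : 0 < θ) (hθ1 : θ ≤ 1) :
    F w - F xstar ≤ ρ / 2 * θ * (Metric.diam U / μc) ^ 2 + ρ * (Metric.diam U / μc) * ‖w - z‖ := by
  obtain ⟨y, hy, hFy, hyw⟩ :=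
    hHC.exists_close_le_convexComb hμH hμc hU hxstar hcxstar hw hθ0.le hθ1
  have hyz : ‖y - z‖ ≤ θ * (Metric.diam U / μc) + ‖w - z‖ :=
    (norm_sub_le_norm_sub_add_norm_sub y w z).trans (by linarith)
  have hcmp := isMinOn_iff.1 hmin y hy
  have hsq := pow_le_pow_left₀ (norm_nonneg _) hyz 2
  refine le_of_mul_le_mul_left ?_ hθ0
  nlinarith

theorem HiddenConvex.inner_add_moreauEnv_sub_le (hHC : HiddenConvex μc μH X U c H F ustar)
    (hμH : 0 ≤ μH) (hμc : 0 < μc) (hU : Bornology.IsBounded U) (hxstar : xstar ∈ X)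
    (hcxstar : c xstar = ustar) {ℓ : ℝ} (hℓ : 0 < ℓ) (hF : WeaklyConvex ℓ F) (hX : Convex ℝ X)
    {α η : ℝ} (hα : 0 < α) (hαη : α ≤ η * ℓ) {z w s : EuclideanSpace ℝ (Fin d)} (hz : z ∈ X)
    (hw : w ∈ X) (hmin : IsMinOn (fun y => F y + 2 * ℓ / 2 * ‖y - z‖ ^ 2) X w)
    (hs : s ∈ WCSubdiff ℓ F z) :
    2 * ℓ * η * ⟪s, w - z⟫ + α * (MoreauEnv X F (2 * ℓ) z - F xstar)
      ≤ 3 * Metric.diam U ^ 2 * α ^ 2 / (2 * μc ^ 2 * η) := by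
  have hη : 0 < η := pos_of_mul_pos_left (hα.trans_le hαη) hℓ.le
  set K := Metric.diam U / μc with hK
  set r := ‖w - z‖ with hr
  have hgrowth := hF.add_sq_le_of_isMinOn hX hw hmin hz
  rw [sub_self, norm_zero, norm_sub_rev z w, ← hr] at hgrowth
  have hinner : ⟪s, w - z⟫ ≤ -(ℓ * r ^ 2) := by
    have := hs w
    rw [← hr] at this
    linarith
  set θ := α / (2 * ℓ * η) with hθ
  have hθη : ℓ * θ * (2 * η) = α := by
    rw [hθ]
    field_simp
  have hgap := hHC.sub_le_of_isMinOn hμH hμc hU hxstar hcxstar (by positivity : 0 ≤ 2 * ℓ) hw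
    hmin (by positivity : 0 < θ) (by rw [hθ, div_le_one (by positivity)]; linarith)
  have hRHS : 3 * Metric.diam U ^ 2 * α ^ 2 / (2 * μc ^ 2 * η) = 3 * K ^ 2 * α ^ 2 / (2 * η) := by
    rw [hK]
    field_simp
  rw [moreauEnv_eq_of_isMinOn hw hmin, hRHS, le_div_iff₀ (by positivity)]
  have h1 := mul_le_mul_of_nonneg_left hinner (by positivity : 0 ≤ 4 * ℓ * η ^ 2)
  have h2 := mul_le_mul_of_nonneg_left hgap (by positivity : 0 ≤ α * (2 * η))
  have h3 := mul_le_mul_of_nonneg_left hαη (by positivity : 0 ≤ 2 * ℓ * η * r ^ 2)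
  have h4 : α * (2 * η) * (2 * ℓ / 2 * θ * K ^ 2) = α ^ 2 * K ^ 2 := by
    linear_combination (α * K ^ 2) * hθη
  -- `3 K² α² / (2η)` is `α² K² / (2η)` from the `θ`-term of `hgap` plus `α² K² / η`,
  -- the maximum over `r` of what remains
  nlinarith [sq_nonneg (ℓ * η * r - α * K)]

end HiddenConvexity

theorem IsCompact.integrable_comp {Ω E : Type*} [MeasurableSpace Ω] {μ : Measure Ω}
    [IsFiniteMeasure μ] [TopologicalSpace E] [MeasurableSpace E] [OpensMeasurableSpace E]
    {K : Set E} (hK : IsCompact K) {f : E → ℝ} (hf : Continuous f) {ξ : Ω → E}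
    (hξ : Measurable ξ) (hξK : ∀ ω, ξ ω ∈ K) : Integrable (fun ω => f (ξ ω)) μ := by
  obtain ⟨C, hC⟩ := hK.exists_bound_of_continuousOn hf.continuousOn
  exact Integrable.of_bound (hf.measurable.comp hξ).aestronglyMeasurable C
    (ae_of_all _ fun ω => hC _ (hξK ω))

section Expectation

variable {Ω E : Type*} {m mΩ : MeasurableSpace Ω} {μ : Measure Ω}
  [NormedAddCommGroup E] [InnerProductSpace ℝ E]

theorem integral_inner_condExp [CompleteSpace E] (hm : m ≤ mΩ) [SigmaFinite (μ.trim hm)]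
    {f v : Ω → E} (hf : Integrable f μ) (hv : StronglyMeasurable[m] v)
    (hfv : Integrable (fun ω => ⟪f ω, v ω⟫) μ) :
    ∫ ω, ⟪μ[f|m] ω, v ω⟫ ∂μ = ∫ ω, ⟪f ω, v ω⟫ ∂μ := by
  rw [← integral_condExp hm (f := fun ω => ⟪f ω, v ω⟫)]
  refine integral_congr_ae ?_
  filter_upwards [condExp_bilin_of_stronglyMeasurable_right (innerSL ℝ) hv hfv hf] with ω hω
  exact hω.symm

theorem integral_sub_le_of_condExp_descent [CompleteSpace E] [IsProbabilityMeasure μ]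
    (hm : m ≤ mΩ) {φ φ' : Ω → ℝ} {g v : Ω → E} {a b α C G K Fstar : ℝ} (hb : 0 ≤ b)
    (hφ : Integrable φ μ) (hφ' : Integrable φ' μ) (hg : MemLp g 2 μ)
    (hv : StronglyMeasurable[m] v) (hvK : ∀ ω, ‖v ω‖ ≤ K)
    (hstep : ∀ ω, φ' ω ≤ φ ω + a * ⟪g ω, v ω⟫ + b * ‖g ω‖ ^ 2)
    (hdesc : ∀ᵐ ω ∂μ, a * ⟪μ[g|m] ω, v ω⟫ ≤ -α * (φ ω - Fstar) + C)
    (hvar : ∀ᵐ ω ∂μ, μ[fun ω => ‖g ω‖ ^ 2|m] ω ≤ G ^ 2) :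
    ∫ ω, φ' ω ∂μ - Fstar ≤ (1 - α) * (∫ ω, φ ω ∂μ - Fstar) + (C + b * G ^ 2) := by
  have hgi : Integrable g μ := hg.integrable one_le_two
  have hg2 : Integrable (fun ω => ‖g ω‖ ^ 2) μ := hg.integrable_norm_pow two_ne_zero
  have hvm : AEStronglyMeasurable v μ := (hv.mono hm).aestronglyMeasurable
  have hgv : Integrable (fun ω => ⟪g ω, v ω⟫) μ :=
    (innerSL ℝ).integrable_of_bilin_of_bdd_right K hgi hvm (ae_of_all _ hvK)
  have hcgv : Integrable (fun ω => ⟪μ[g|m] ω, v ω⟫) μ :=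
    (innerSL ℝ).integrable_of_bilin_of_bdd_right K (integrable_condExp (m := m) (f := g)) hvm
      (ae_of_all _ hvK)
  have hE1 : ∫ ω, a * ⟪μ[g|m] ω, v ω⟫ ∂μ ≤ ∫ ω, (-α * (φ ω - Fstar) + C) ∂μ :=
    integral_mono_ae (hcgv.const_mul a)
      (((hφ.sub (integrable_const _)).const_mul _).add (integrable_const _)) hdesc
  have hE2 : ∫ ω, ‖g ω‖ ^ 2 ∂μ ≤ G ^ 2 := by
    rw [← integral_condExp hm]
    simpa using integral_mono_ae integrable_condExp (integrable_const (G ^ 2)) hvar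
  have hφgv : Integrable (fun ω => φ ω + a * ⟪g ω, v ω⟫) μ := hφ.add (hgv.const_mul a)
  have hE3 : ∫ ω, φ' ω ∂μ ≤ ∫ ω, (φ ω + a * ⟪g ω, v ω⟫ + b * ‖g ω‖ ^ 2) ∂μ :=
    integral_mono hφ' (hφgv.add (hg2.const_mul b)) hstep
  have hφc : Integrable (fun ω => -α * (φ ω - Fstar)) μ :=
    (hφ.sub (integrable_const Fstar)).const_mul (-α)
  rw [integral_const_mul, integral_inner_condExp hm hgi hv hgv, integral_add hφc
    (integrable_const C), integral_const_mul, integral_sub hφ (integrable_const Fstar)] at hE1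
  rw [integral_add hφgv (hg2.const_mul b), integral_add hφ (hgv.const_mul a), integral_const_mul,
    integral_const_mul] at hE3
  simp only [integral_const, probReal_univ, smul_eq_mul, one_mul] at hE1
  nlinarith [mul_le_mul_of_nonneg_left hE2 hb]

end Expectation

section Step

variable {d : ℕ} {μc μH ℓ : ℝ} {X U : Set (EuclideanSpace ℝ (Fin d))}
  {c : EuclideanSpace ℝ (Fin d) → EuclideanSpace ℝ (Fin d)} {H F : EuclideanSpace ℝ (Fin d) → ℝ}
  {ustar xstar : EuclideanSpace ℝ (Fin d)}
  {prox : EuclideanSpace ℝ (Fin d) → EuclideanSpace ℝ (Fin d)}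
  {Ω : Type*} {m mΩ : MeasurableSpace Ω} {μ : Measure Ω}

theorem HiddenConvex.integral_moreauEnv_step [IsProbabilityMeasure μ]
    (hHC : HiddenConvex μc μH X U c H F ustar) (hμH : 0 ≤ μH) (hμc : 0 < μc)
    (hU : Bornology.IsBounded U) (hxstar : xstar ∈ X) (hcxstar : c xstar = ustar) (hℓ : 0 < ℓ)
    (hF : WeaklyConvex ℓ F) (hX : Convex ℝ X) (hXc : IsCompact X) (hprox_cont : Continuous prox)
    (hprox : ∀ z, prox z ∈ X ∧ IsMinOn (fun y => F y + 2 * ℓ / 2 * ‖y - z‖ ^ 2) X (prox z))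
    {α η G : ℝ} (hα : 0 < α) (hαη : α ≤ η * ℓ) (hm : m ≤ mΩ)
    {z z' g : Ω → EuclideanSpace ℝ (Fin d)} (hz : Measurable[m] z) (hz' : Measurable z')
    (hzX : ∀ ω, z ω ∈ X) (hg : MemLp g 2 μ) (hproj : ∀ ω, IsProjection X (z ω - η • g ω) (z' ω))
    (hsub : ∀ᵐ ω ∂μ, μ[g|m] ω ∈ WCSubdiff ℓ F (z ω))
    (hvar : ∀ᵐ ω ∂μ, μ[fun ω => ‖g ω‖ ^ 2|m] ω ≤ G ^ 2) :
    ∫ ω, MoreauEnv X F (2 * ℓ) (z' ω) ∂μ - F xstar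
      ≤ (1 - α) * (∫ ω, MoreauEnv X F (2 * ℓ) (z ω) ∂μ - F xstar)
        + (3 * Metric.diam U ^ 2 * α ^ 2 / (2 * μc ^ 2 * η) + 2 * ℓ * η ^ 2 / 2 * G ^ 2) := by
  have hΦ := continuous_moreauEnv hF.continuous hprox_cont hprox
  refine integral_sub_le_of_condExp_descent (v := fun ω => prox (z ω) - z ω) hm (by positivity)
    (hXc.integrable_comp hΦ (hz.mono hm le_rfl) hzX)
    (hXc.integrable_comp hΦ hz' fun ω => (hproj ω).1)
    hg ((hprox_cont.measurable.comp hz).sub hz).stronglyMeasurable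
    (fun ω => hHC.norm_sub_le hμc hU (hprox _).1 (hzX ω))
    (fun ω => moreauEnv_le_of_isProjection hX (by positivity) (hprox _).1 (hprox _).2
      (hprox _).1 (hprox _).2 (hproj ω)) ?_ hvar
  filter_upwards [hsub] with ω hs
  linarith [hHC.inner_add_moreauEnv_sub_le hμH hμc hU hxstar hcxstar hℓ hF hX hα hαη (hzX ω)
    (hprox _).1 (hprox _).2 hs]

end Step

theorem sgm_convergence_hidden_convex_general {d : ℕ}
    {Ω : Type} [MeasurableSpace Ω] (μ : Measure Ω) [IsProbabilityMeasure μ]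
    (X U : Set (EuclideanSpace ℝ (Fin d))) (hXcl : IsClosed X) (hXcvx : Convex ℝ X)
    (F H : EuclideanSpace ℝ (Fin d) → ℝ) (c : EuclideanSpace ℝ (Fin d) → EuclideanSpace ℝ (Fin d)) (μc ℓ ρ η GF DU : ℝ)
    (hμc : 0 < μc) (hℓ : 0 < ℓ) (ustar xstar : EuclideanSpace ℝ (Fin d))
    (hHC : HiddenConvex μc 0 X U c H F ustar)
    (hWC : WeaklyConvex ℓ F)
    (hxstar : xstar ∈ X) (hcxstar : c xstar = ustar)
    (hUbdd : Bornology.IsBounded U) (hDU : DU = Metric.diam U)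
    (hρ : ρ = 2 * ℓ) (hη0 : 0 < η) (hη : η ≤ 1 / (2 * ℓ))
    (x g : ℕ → Ω → EuclideanSpace ℝ (Fin d)) (x0 : EuclideanSpace ℝ (Fin d)) (hx0X : x0 ∈ X) (hx0 : ∀ ω, x 0 ω = x0)
    (hgmeas : ∀ t, Measurable (g t)) (hgL2 : ∀ t, MemLp (g t) 2 μ)
    (hadapt : ∀ t, @Measurable Ω (EuclideanSpace ℝ (Fin d)) (sgdFiltration g t) _ (x t))
    (hrec : ∀ t ω, IsProjection X (x t ω - η • g t ω) (x (t + 1) ω))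
    (hcond : ∀ t, ∀ᵐ ω ∂μ, (μ[g t | sgdFiltration g t]) ω ∈ WCSubdiff ℓ F (x t ω))
    (hvar : ∀ t, ∀ᵐ ω ∂μ,
      (μ[(fun ω' => ‖g t ω'‖ ^ 2) | sgdFiltration g t]) ω ≤ GF ^ 2) :
    ∀ α : ℝ, 0 < α → α ≤ η * ℓ → ∀ T : ℕ,
      (∫ ω, MoreauEnv X F ρ (x T ω) ∂μ) - F xstar ≤
        (1 - α) ^ T * ((∫ ω, MoreauEnv X F ρ (x 0 ω) ∂μ) - F xstar)
          + 3 * DU ^ 2 * α / (2 * μc ^ 2 * η) + 8 * ℓ * η ^ 2 * GF ^ 2 / α := by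
  subst hρ hDU
  intro α hα hαη T
  have hα1 : α ≤ 1 := by
    rw [le_div_iff₀ (by positivity)] at hη
    nlinarith
  have hXc := hHC.isCompact hμc hUbdd hXcl
  obtain ⟨prox, hprox_cont, hprox⟩ :=
    hWC.exists_continuous_isMinOn hXc ⟨xstar, hxstar⟩ hXcvx (ρ := 2 * ℓ) (by linarith)
      (by positivity)
  have hxX : ∀ t ω, x t ω ∈ X := by
    rintro (_ | t) ω
    · exact hx0 ω ▸ hx0X
    · exact (hrec t ω).1
  have hm : ∀ t, sgdFiltration g t ≤ ‹MeasurableSpace Ω› := fun t =>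
    iSup₂_le fun i _ => (hgmeas i).comap_le
  let Λ t := (∫ ω, MoreauEnv X F (2 * ℓ) (x t ω) ∂μ) - F xstar
  have hstep : ∀ t, Λ (t + 1) ≤ (1 - α) * Λ t
      + (3 * Metric.diam U ^ 2 * α ^ 2 / (2 * μc ^ 2 * η) + 2 * ℓ * η ^ 2 / 2 * GF ^ 2) :=
    fun t => hHC.integral_moreauEnv_step le_rfl hμc hUbdd hxstar hcxstar hℓ hWC hXcvx hXc
      hprox_cont hprox hα hαη (hm t) (hadapt t) ((hadapt (t + 1)).mono (hm _) le_rfl) (hxX t)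
      (hgL2 t) (hrec t) (hcond t) (hvar t)
  refine (le_pow_mul_add_div_of_le_mul_add hα hα1 (by positivity) hstep T).trans ?_
  have hsplit : (3 * Metric.diam U ^ 2 * α ^ 2 / (2 * μc ^ 2 * η) + 2 * ℓ * η ^ 2 / 2 * GF ^ 2) / α
      = 3 * Metric.diam U ^ 2 * α / (2 * μc ^ 2 * η) + ℓ * η ^ 2 * GF ^ 2 / α := by
    field_simp
  have hnoise : ℓ * η ^ 2 * GF ^ 2 / α ≤ 8 * ℓ * η ^ 2 * GF ^ 2 / α := by
    have : 0 ≤ ℓ * η ^ 2 * GF ^ 2 := by positivity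
    gcongr
    linarith
  rw [hsplit]
  linarith

/-- Theorem 4.3: convergence of the projected stochastic subgradient method in the hidden
convex setting (`μ_H = 0`). -/
theorem sgm_convergence_hidden_convex {d : ℕ}
    {Ω : Type} [MeasurableSpace Ω] (μ : Measure Ω) [IsProbabilityMeasure μ]
    (X U : Set (EuclideanSpace ℝ (Fin d))) (hXne : X.Nonempty) (hXcl : IsClosed X) (hXcvx : Convex ℝ X)
    (F H : EuclideanSpace ℝ (Fin d) → ℝ) (c : EuclideanSpace ℝ (Fin d) → EuclideanSpace ℝ (Fin d)) (μc ℓ ρ η GF DU : ℝ)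
    (hμc : 0 < μc) (hℓ : 0 < ℓ) (ustar xstar : EuclideanSpace ℝ (Fin d))
    (hHC : HiddenConvex μc 0 X U c H F ustar)
    (hWC : WeaklyConvex ℓ F)
    (hxstar : xstar ∈ X) (hcxstar : c xstar = ustar)
    (hUbdd : Bornology.IsBounded U) (hDU : DU = Metric.diam U) (hDUpos : 0 < DU)
    (hρ : ρ = 2 * ℓ) (hη0 : 0 < η) (hη : η ≤ 1 / (2 * ℓ))
    (x g : ℕ → Ω → EuclideanSpace ℝ (Fin d)) (x0 : EuclideanSpace ℝ (Fin d)) (hx0X : x0 ∈ X) (hx0 : ∀ ω, x 0 ω = x0)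
    (hgmeas : ∀ t, Measurable (g t)) (hgL2 : ∀ t, MemLp (g t) 2 μ)
    (hadapt : ∀ t, @Measurable Ω (EuclideanSpace ℝ (Fin d)) (sgdFiltration g t) _ (x t))
    (hrec : ∀ t ω, IsProjection X (x t ω - η • g t ω) (x (t + 1) ω))
    (hcond : ∀ t, ∀ᵐ ω ∂μ, (μ[g t | sgdFiltration g t]) ω ∈ WCSubdiff ℓ F (x t ω))
    (hvar : ∀ t, ∀ᵐ ω ∂μ,
      (μ[(fun ω' => ‖g t ω'‖ ^ 2) | sgdFiltration g t]) ω ≤ GF ^ 2) :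
    ∀ α : ℝ, 0 < α → α ≤ η * ℓ → ∀ T : ℕ,
      (∫ ω, MoreauEnv X F ρ (x T ω) ∂μ) - F xstar ≤
        (1 - α) ^ T * ((∫ ω, MoreauEnv X F ρ (x 0 ω) ∂μ) - F xstar)
          + 3 * DU ^ 2 * α / (2 * μc ^ 2 * η) + 8 * ℓ * η ^ 2 * GF ^ 2 / α :=
  sgm_convergence_hidden_convex_general μ X U hXcl hXcvx F H c μc ℓ ρ η GF DU hμc hℓ ustar xstar hHC
    hWC hxstar hcxstar hUbdd hDU hρ hη0 hη x g x0 hx0X hx0 hgmeas hgL2 hadapt hrec hcond hvar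
end
end

section
/- Let F : ℝ^d → ℝ be differentiable with ‖∇F(x) − ∇F(y)‖ ≤ L‖x − y‖ for all x, y ∈ X (L > 0), and hidden convex on X with moduli μ_c > 0 and μ_H ≥ 0, and let x* ∈ X be the minimizer of F over X. Let g ∈ ℝ^d be arbitrary, let 0 < η ≤ 1/L, fix x ∈ X and set x⁺ := Π_X(x − η g). Then for every α ∈ [0,1]: F(x⁺) ≤ (1−α)F(x) + αF(x*) + (α²/(μ_c² η) − (1−α)α μ_H/2)‖c(x) − c(x*)‖² − (1/(2η) − L/2)‖x⁺ − x‖² + (η/2)‖g − ∇F(x)‖². -/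
open MeasureTheory
open scoped RealInnerProductSpace

noncomputable section

/-!
For any `y ∈ X`, the two-sided quadratic bounds coming from the `L`-Lipschitz gradient, the
variational inequality of the projection and Young's inequality for the gradient error `g - ∇F(x)`
give `F(x⁺) ≤ F(y) + ‖y - x‖² / η - (1/(2η) - L/2) ‖x⁺ - x‖² + (η/2) ‖g - ∇F(x)‖²`.
Taking `y := c⁻¹((1 - α) c(x) + α c(x*))`, the strong convexity of `H` bounds `F(y)` by the
interpolation of `F(x)` and `F(x*)`, and the expansiveness of `c` gives
`‖y - x‖ ≤ (α / μc) ‖c(x) - c(x*)‖`.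
-/
open Set

variable {E : Type*} [NormedAddCommGroup E] [InnerProductSpace ℝ E]

theorem Convex.abs_sub_sub_inner_le_of_lipschitz_gradient [CompleteSpace E] {X : Set E}
    (hX : Convex ℝ X) {F : E → ℝ} {F' : E → E} {L : ℝ} (hgrad : ∀ y ∈ X, HasGradientAt F (F' y) y)
    (hLip : ∀ u ∈ X, ∀ v ∈ X, ‖F' u - F' v‖ ≤ L * ‖u - v‖) {u v : E} (hu : u ∈ X) (hv : v ∈ X) :
    |F v - F u - ⟪F' u, v - u⟫| ≤ L / 2 * ‖v - u‖ ^ 2 := by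
  set w := v - u
  have hseg : ∀ t ∈ Icc (0 : ℝ) 1, u + t • w ∈ X := fun t ht => by
    simpa [w, AffineMap.lineMap_apply_module', add_comm] using
      hX.lineMap_mem hu hv ht
  have hderiv : ∀ t ∈ Icc (0 : ℝ) 1,
      HasDerivAt (fun s : ℝ => F (u + s • w) - F u - s * ⟪F' u, w⟫)
        (⟪F' (u + t • w) - F' u, w⟫) t := by
    intro t ht
    have hline : HasDerivAt (fun s : ℝ => u + s • w) w t := by
      simpa using ((hasDerivAt_id t).smul_const w).const_add u
    have hF := (hgrad _ (hseg t ht)).hasFDerivAt.comp_hasDerivAt t hline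
    refine ((hF.sub_const (F u)).sub ((hasDerivAt_id t).mul_const ⟪F' u, w⟫)).congr_deriv ?_
    simp [inner_sub_left, InnerProductSpace.toDual_apply_apply]
  -- Fencing: the derivative is bounded by `L t ‖w‖²`, the derivative of the barrier `L/2 t² ‖w‖²`.
  have hbound := image_norm_le_of_norm_deriv_right_le_deriv_boundary
    (f := fun s : ℝ => F (u + s • w) - F u - s * ⟪F' u, w⟫) (a := 0) (b := 1)
    (B := fun t => L / 2 * ‖w‖ ^ 2 * t ^ 2) (B' := fun t => L * ‖w‖ ^ 2 * t)
    (fun t ht => (hderiv t ht).continuousAt.continuousWithinAt)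
    (fun t ht => (hderiv t (Ico_subset_Icc_self ht)).hasDerivWithinAt)
    (by simp) (fun t => ((hasDerivAt_pow 2 t).const_mul _).congr_deriv (by ring))
    (fun t ht => by
      calc ‖⟪F' (u + t • w) - F' u, w⟫‖ ≤ ‖F' (u + t • w) - F' u‖ * ‖w‖ := by
            rw [Real.norm_eq_abs]; exact abs_real_inner_le_norm _ _
        _ ≤ L * ‖u + t • w - u‖ * ‖w‖ := by
            gcongr; exact hLip _ (hseg t (Ico_subset_Icc_self ht)) _ hu
        _ = L * ‖w‖ ^ 2 * t := by
            rw [add_sub_cancel_left, norm_smul, Real.norm_of_nonneg ht.1]; ring)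
    (right_mem_Icc.2 zero_le_one)
  simpa [w] using hbound

theorem two_mul_inner_le_of_inner_sub_sub_le_zero {x v xplus y : E}
    (h : ⟪x - v - xplus, y - xplus⟫ ≤ 0) :
    2 * ⟪v, xplus - y⟫ ≤ ‖y - x‖ ^ 2 - ‖xplus - x‖ ^ 2 - ‖xplus - y‖ ^ 2 := by
  have hexp : ‖y - x‖ ^ 2 = ‖(y - xplus) + (xplus - x)‖ ^ 2 := by congr 2; abel
  rw [hexp, norm_add_sq_real, ← norm_neg (xplus - y), neg_sub]
  simp only [inner_sub_left, inner_sub_right, real_inner_comm] at h ⊢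
  linarith

theorem Convex.le_of_inexact_projected_gradient_step [CompleteSpace E] {X : Set E}
    (hX : Convex ℝ X) {F : E → ℝ} {F' : E → E} {L η : ℝ}
    (hgrad : ∀ y ∈ X, HasGradientAt F (F' y) y)
    (hLip : ∀ u ∈ X, ∀ v ∈ X, ‖F' u - F' v‖ ≤ L * ‖u - v‖) (hη0 : 0 < η) (hLη : L * η ≤ 1)
    {g x xplus y : E} (hx : x ∈ X) (hxplus : xplus ∈ X) (hy : y ∈ X)
    (hvar : ⟪x - η • g - xplus, y - xplus⟫ ≤ 0) :
    F xplus ≤ F y + ‖y - x‖ ^ 2 / η - (1 / (2 * η) - L / 2) * ‖xplus - x‖ ^ 2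
      + η / 2 * ‖g - F' x‖ ^ 2 := by
  have hupper :=
    (abs_le.mp (hX.abs_sub_sub_inner_le_of_lipschitz_gradient hgrad hLip hx hxplus)).2
  have hlower :=
    (abs_le.mp (hX.abs_sub_sub_inner_le_of_lipschitz_gradient hgrad hLip hx hy)).1
  have hthree := two_mul_inner_le_of_inner_sub_sub_le_zero hvar
  rw [real_inner_smul_left] at hthree
  have hyoung : 2 * η * ⟪F' x - g, xplus - y⟫ ≤ η ^ 2 * ‖g - F' x‖ ^ 2 + ‖xplus - y‖ ^ 2 := by
    have hcs := real_inner_le_norm (F' x - g) (xplus - y)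
    rw [norm_sub_rev] at hcs
    nlinarith [mul_le_mul_of_nonneg_left hcs (by positivity : (0 : ℝ) ≤ 2 * η),
      two_mul_le_add_sq (η * ‖g - F' x‖) ‖xplus - y‖]
  have hsplit : ⟪F' x, xplus - x⟫ = ⟪F' x - g, xplus - y⟫ + ⟪g, xplus - y⟫ + ⟪F' x, y - x⟫ := by
    simp only [inner_sub_left, inner_sub_right]; ring
  have hscaled : η * F xplus ≤ η * F y + ‖y - x‖ ^ 2 - (1 / 2 - L * η / 2) * ‖xplus - x‖ ^ 2
      + η ^ 2 / 2 * ‖g - F' x‖ ^ 2 := by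
    nlinarith [mul_le_mul_of_nonneg_right hLη (sq_nonneg ‖y - x‖)]
  have hη : η ≠ 0 := hη0.ne'
  refine le_of_mul_le_mul_left (le_of_le_of_eq hscaled ?_) hη0
  field_simp

theorem IsProjection.inner_sub_le_zero {d : ℕ} {X : Set (EuclideanSpace ℝ (Fin d))}
    {p q : EuclideanSpace ℝ (Fin d)} (h : IsProjection X p q) (hX : Convex ℝ X)
    {y : EuclideanSpace ℝ (Fin d)} (hy : y ∈ X) : ⟪p - q, y - q⟫ ≤ 0 := by
  refine (norm_eq_iInf_iff_real_inner_le_zero hX h.1).1 ?_ y hy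
  have : Nonempty X := ⟨⟨q, h.1⟩⟩
  have hbdd : BddBelow (range fun z : X => ‖p - (z : EuclideanSpace ℝ (Fin d))‖) :=
    ⟨0, by rintro _ ⟨z, rfl⟩; exact norm_nonneg _⟩
  refine le_antisymm (le_ciInf fun z => ?_) (ciInf_le hbdd ⟨q, h.1⟩)
  rw [norm_sub_rev, norm_sub_rev p]
  exact h.2 z z.2

theorem HiddenConvex.exists_near_le_interpolation {d : ℕ} {μc μH : ℝ}
    {X U : Set (EuclideanSpace ℝ (Fin d))} {c : EuclideanSpace ℝ (Fin d) → EuclideanSpace ℝ (Fin d)}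
    {H F : EuclideanSpace ℝ (Fin d) → ℝ} {ustar : EuclideanSpace ℝ (Fin d)}
    (hHC : HiddenConvex μc μH X U c H F ustar) (hμc : 0 < μc) {x x' : EuclideanSpace ℝ (Fin d)}
    (hx : x ∈ X) (hx' : x' ∈ X) {α : ℝ} (hα : α ∈ Icc (0 : ℝ) 1) :
    ∃ y ∈ X, F y ≤ (1 - α) * F x + α * F x' - (1 - α) * α * μH / 2 * ‖c x - c x'‖ ^ 2 ∧
      ‖y - x‖ ^ 2 ≤ α ^ 2 / μc ^ 2 * ‖c x - c x'‖ ^ 2 := by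
  obtain ⟨hU, hbij, hexp, hFH, hHconv, -, -⟩ := hHC
  have hcx := hbij.mapsTo hx
  have hcx' := hbij.mapsTo hx'
  obtain ⟨y, hy, hcy⟩ := hbij.surjOn (hU hcx hcx' (by linarith [hα.2]) hα.1 (sub_add_cancel 1 α))
  refine ⟨y, hy, ?_, ?_⟩
  · rw [hFH y hy, hcy, hFH x hx, hFH x' hx']
    exact hHconv _ hcx _ hcx' α hα
  · have hcdist : ‖c x - c y‖ = α * ‖c x - c x'‖ := by
      rw [hcy, show c x - ((1 - α) • c x + α • c x') = α • (c x - c x') by module,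
        norm_smul, Real.norm_of_nonneg hα.1]
    have hdist : μc * ‖y - x‖ ≤ α * ‖c x - c x'‖ := by
      rw [norm_sub_rev, ← hcdist]; exact hexp x hx y hy
    rw [div_mul_eq_mul_div, le_div_iff₀ (by positivity)]
    nlinarith [mul_le_mul hdist hdist (by positivity) (mul_nonneg hα.1 (norm_nonneg _))]

theorem momentum_descent_inequality_general {d : ℕ}
    (X U : Set (EuclideanSpace ℝ (Fin d))) (hXcvx : Convex ℝ X)
    (F H : EuclideanSpace ℝ (Fin d) → ℝ) (c : EuclideanSpace ℝ (Fin d) → EuclideanSpace ℝ (Fin d)) (F' : EuclideanSpace ℝ (Fin d) → EuclideanSpace ℝ (Fin d))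
    (L μc μH η : ℝ) (hμc : 0 < μc)
    (ustar xstar : EuclideanSpace ℝ (Fin d))
    (hgrad : ∀ y, HasGradientAt F (F' y) y)
    (hLip : ∀ u ∈ X, ∀ v ∈ X, ‖F' u - F' v‖ ≤ L * ‖u - v‖)
    (hHC : HiddenConvex μc μH X U c H F ustar)
    (hxstar : xstar ∈ X)
    (hη0 : 0 < η) (hη : η ≤ 1 / L)
    (g : EuclideanSpace ℝ (Fin d)) (x xplus : EuclideanSpace ℝ (Fin d)) (hx : x ∈ X)
    (hxplus : IsProjection X (x - η • g) xplus) :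
    ∀ α ∈ Set.Icc (0 : ℝ) 1,
      F xplus ≤ (1 - α) * F x + α * F xstar
        + (α ^ 2 / (μc ^ 2 * η) - (1 - α) * α * μH / 2) * ‖c x - c xstar‖ ^ 2
        - (1 / (2 * η) - L / 2) * ‖xplus - x‖ ^ 2 + η / 2 * ‖g - F' x‖ ^ 2 := by
  intro α hα
  obtain ⟨y, hy, hFy, hyx⟩ := hHC.exists_near_le_interpolation hμc hx hxstar hα
  have hLη : L * η ≤ 1 := by
    rcases le_or_gt L 0 with hL | hL
    · nlinarith
    · rwa [le_div_iff₀' hL] at hη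
  have hstep := hXcvx.le_of_inexact_projected_gradient_step (fun y _ => hgrad y) hLip hη0 hLη hx
    hxplus.1 hy (hxplus.inner_sub_le_zero hXcvx hy)
  have hdist : ‖y - x‖ ^ 2 / η ≤ α ^ 2 / (μc ^ 2 * η) * ‖c x - c xstar‖ ^ 2 := by
    calc ‖y - x‖ ^ 2 / η ≤ α ^ 2 / μc ^ 2 * ‖c x - c xstar‖ ^ 2 / η := by gcongr
      _ = α ^ 2 / (μc ^ 2 * η) * ‖c x - c xstar‖ ^ 2 := by ring
  linarith

/-- Theorem 6.2: key deterministic one-step descent inequality for projected gradient steps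
with an inexact gradient estimate `g`, under hidden convexity. -/
theorem momentum_descent_inequality {d : ℕ}
    (X U : Set (EuclideanSpace ℝ (Fin d))) (hXne : X.Nonempty) (hXcl : IsClosed X) (hXcvx : Convex ℝ X)
    (F H : EuclideanSpace ℝ (Fin d) → ℝ) (c : EuclideanSpace ℝ (Fin d) → EuclideanSpace ℝ (Fin d)) (F' : EuclideanSpace ℝ (Fin d) → EuclideanSpace ℝ (Fin d))
    (L μc μH η : ℝ) (hL : 0 < L) (hμc : 0 < μc) (hμH : 0 ≤ μH)
    (ustar xstar : EuclideanSpace ℝ (Fin d))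
    (hgrad : ∀ y, HasGradientAt F (F' y) y)
    (hLip : ∀ u ∈ X, ∀ v ∈ X, ‖F' u - F' v‖ ≤ L * ‖u - v‖)
    (hHC : HiddenConvex μc μH X U c H F ustar)
    (hxstar : xstar ∈ X) (hcxstar : c xstar = ustar)
    (hη0 : 0 < η) (hη : η ≤ 1 / L)
    (g : EuclideanSpace ℝ (Fin d)) (x xplus : EuclideanSpace ℝ (Fin d)) (hx : x ∈ X)
    (hxplus : IsProjection X (x - η • g) xplus) :
    ∀ α ∈ Set.Icc (0 : ℝ) 1,
      F xplus ≤ (1 - α) * F x + α * F xstar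
        + (α ^ 2 / (μc ^ 2 * η) - (1 - α) * α * μH / 2) * ‖c x - c xstar‖ ^ 2
        - (1 / (2 * η) - L / 2) * ‖xplus - x‖ ^ 2 + η / 2 * ‖g - F' x‖ ^ 2 :=
  momentum_descent_inequality_general X U hXcvx F H c F' L μc μH η hμc ustar xstar hgrad hLip hHC
    hxstar hη0 hη g x xplus hx hxplus
end
end
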